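/- arXiv:2510.18100 — 2 statements merged into one kernel-verified Lean document; each statement's English description precedes it below -/
import Mathlib

section
/- Let m be a natural number and φ : ℝ → [0,∞) a measurable function. Then ∫₀^∞ ( ∫₁^∞ e^{−k²t} · k^{2m} · φ(k) dk )² dt ≤ (π/2) · ∫₁^∞ k^{4m−1} · φ(k)² dk. -/
open MeasureTheory

section LaplaceAux

open Set Real


private lemma sq_rpow (x : ENNReal) : x ^ (2:ℝ) = x * x := by
  rw [show (2:ℝ) = ((2:ℕ):ℝ) by norm_num, ENNReal.rpow_natCast, pow_two]

private lemma aux_CS (m : ℕ) (φ : ℝ → ℝ) (hφm : Measurable φ) (hφ : ∀ k, 0 ≤ φ k) (t : ℝ) :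
    (∫⁻ k in Set.Ioi (1:ℝ), ENNReal.ofReal (Real.exp (-k^2*t) * k^(2*m) * φ k)) ^ 2
      ≤ (∫⁻ k in Set.Ioi (1:ℝ), ENNReal.ofReal (Real.exp (-k^2*t))) *
        (∫⁻ k in Set.Ioi (1:ℝ), ENNReal.ofReal (Real.exp (-k^2*t) * (k^(2*m) * φ k)^2)) := by
  set μ := volume.restrict (Set.Ioi (1:ℝ)) with hμ
  set f : ℝ → ENNReal := fun k => ENNReal.ofReal (Real.exp (-k^2*t/2)) with hfdef
  set g : ℝ → ENNReal := fun k => ENNReal.ofReal (Real.exp (-k^2*t/2) * (k^(2*m) * φ k)) with hgdef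
  have hmr : Measurable fun k : ℝ => Real.exp (-k^2*t/2) :=
    (((measurable_id.pow_const 2).neg.mul_const t).div_const 2).exp
  have hK : Measurable fun k : ℝ => k ^ (2*m) * φ k := (measurable_id.pow_const _).mul hφm
  have hf : AEMeasurable f μ := hmr.ennreal_ofReal.aemeasurable
  have hg : AEMeasurable g μ := (hmr.mul hK).ennreal_ofReal.aemeasurable
  have h := ENNReal.lintegral_mul_le_Lp_mul_Lq μ
    (Real.holderConjugate_iff.mpr ⟨one_lt_two, by norm_num⟩ : Real.HolderConjugate 2 2) hf hg
  have hfg : ∀ k : ℝ, (f * g) k = ENNReal.ofReal (Real.exp (-k^2*t) * k^(2*m) * φ k) := by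
    intro k
    simp only [Pi.mul_apply, hfdef, hgdef]
    rw [← ENNReal.ofReal_mul (Real.exp_pos _).le]
    congr 1
    rw [show Real.exp (-k^2*t) = Real.exp (-k^2*t/2) * Real.exp (-k^2*t/2) by
      rw [← Real.exp_add]; congr 1; ring]
    ring
  have hf2 : ∀ k : ℝ, f k ^ (2:ℝ) = ENNReal.ofReal (Real.exp (-k^2*t)) := by
    intro k
    rw [sq_rpow, hfdef, ← ENNReal.ofReal_mul (Real.exp_pos _).le, ← Real.exp_add]
    congr 2
    ring
  have hg2 : ∀ k : ℝ, g k ^ (2:ℝ) = ENNReal.ofReal (Real.exp (-k^2*t) * (k^(2*m) * φ k)^2) := by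
    intro k
    rw [sq_rpow, hgdef, ← ENNReal.ofReal_mul (mul_nonneg (Real.exp_pos _).le (mul_nonneg ((even_two_mul m).pow_nonneg _) (hφ k)))]
    congr 1
    rw [show Real.exp (-k^2*t) = Real.exp (-k^2*t/2) * Real.exp (-k^2*t/2) by
      rw [← Real.exp_add]; congr 1; ring]
    ring
  simp only [hfg, hf2, hg2] at h
  calc (∫⁻ k in Set.Ioi (1:ℝ), ENNReal.ofReal (Real.exp (-k^2*t) * k^(2*m) * φ k)) ^ 2
      ≤ ((∫⁻ k, ENNReal.ofReal (Real.exp (-k^2*t)) ∂μ) ^ ((1:ℝ)/2) *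
         (∫⁻ k, ENNReal.ofReal (Real.exp (-k^2*t) * (k^(2*m) * φ k)^2) ∂μ) ^ ((1:ℝ)/2)) ^ 2 :=
        pow_le_pow_left₀ (by positivity) h 2
    _ = _ := by
        rw [mul_pow, ← ENNReal.rpow_natCast (_ ^ ((1:ℝ)/2)) 2, ← ENNReal.rpow_natCast (_ ^ ((1:ℝ)/2)) 2,
          ← ENNReal.rpow_mul, ← ENNReal.rpow_mul]
        norm_num


private lemma aux_gauss {t : ℝ} (ht : 0 < t) :
    ∫⁻ k in Set.Ioi (1:ℝ), ENNReal.ofReal (Real.exp (-k^2*t))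
      ≤ ENNReal.ofReal (Real.sqrt Real.pi / 2 * t ^ (-(1/2):ℝ)) := by
  calc ∫⁻ k in Set.Ioi (1:ℝ), ENNReal.ofReal (Real.exp (-k^2*t))
      ≤ ∫⁻ k in Set.Ioi (0:ℝ), ENNReal.ofReal (Real.exp (-k^2*t)) :=
        lintegral_mono_set (Set.Ioi_subset_Ioi zero_le_one)
    _ = ENNReal.ofReal (∫ k in Set.Ioi (0:ℝ), Real.exp (-t * k^2)) := by
        rw [ofReal_integral_eq_lintegral_ofReal ((integrable_exp_neg_mul_sq ht).integrableOn)
          (Filter.Eventually.of_forall fun k => (Real.exp_pos _).le)]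
        refine lintegral_congr fun k => ?_
        congr 2
        ring
    _ ≤ ENNReal.ofReal (Real.sqrt Real.pi / 2 * t ^ (-(1/2):ℝ)) := by
        rw [integral_gaussian_Ioi, Real.sqrt_div pi_pos.le, Real.rpow_neg ht.le,
          ← Real.sqrt_eq_rpow]
        apply le_of_eq
        congr 1
        ring

private lemma aux_time {k : ℝ} (hk : 1 < k) :
    ∫⁻ t in Set.Ioi (0:ℝ),
        ENNReal.ofReal (Real.sqrt Real.pi / 2 * t ^ (-(1/2):ℝ) * Real.exp (-k^2*t))
      = ENNReal.ofReal (Real.pi / (2*k)) := by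
  have hk0 : 0 < k := lt_trans one_pos hk
  have hb : 0 < k^2 := by positivity
  have hint : IntegrableOn
      (fun t : ℝ => Real.sqrt Real.pi / 2 * t ^ (-(1/2):ℝ) * Real.exp (-k^2*t)) (Set.Ioi 0) := by
    have h0 := integrableOn_rpow_mul_exp_neg_mul_rpow
      (by norm_num : (-1:ℝ) < -(1/2)) one_pos hb
    have h1 : IntegrableOn (fun x : ℝ => x ^ (-(1/2):ℝ) * Real.exp (-k^2 * x)) (Set.Ioi 0) := by
      refine h0.congr_fun (fun x hx => ?_) measurableSet_Ioi
      simp only [Real.rpow_one]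
    simpa [mul_assoc, IntegrableOn] using h1.const_mul (Real.sqrt Real.pi / 2)
  rw [← ofReal_integral_eq_lintegral_ofReal hint ?nn]
  case nn =>
    filter_upwards [ae_restrict_mem measurableSet_Ioi] with t ht
    have : (0:ℝ) < t := ht
    positivity
  congr 1
  have hval : ∫ t in Set.Ioi (0:ℝ), t ^ ((1:ℝ)/2 - 1) * Real.exp (-(k^2 * t))
      = (1 / k^2) ^ ((1:ℝ)/2) * Real.Gamma (1/2) :=
    integral_rpow_mul_exp_neg_mul_Ioi one_half_pos hb
  have hre : ∫ t in Set.Ioi (0:ℝ),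
      Real.sqrt Real.pi / 2 * t ^ (-(1/2):ℝ) * Real.exp (-k^2*t)
      = Real.sqrt Real.pi / 2 * ∫ t in Set.Ioi (0:ℝ), t ^ ((1:ℝ)/2 - 1) * Real.exp (-(k^2 * t)) := by
    rw [← MeasureTheory.integral_const_mul]
    refine setIntegral_congr_fun measurableSet_Ioi fun t ht => ?_
    rw [show ((1:ℝ)/2 - 1) = -(1/2) by norm_num, neg_mul]
    ring
  rw [hre, hval, Real.Gamma_one_half_eq]
  have h1k : ((1:ℝ) / k^2) ^ ((1:ℝ)/2) = k⁻¹ := by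
    rw [one_div, ← Real.rpow_natCast k 2, ← Real.rpow_neg hk0.le,
      ← Real.rpow_mul hk0.le]
    norm_num [Real.rpow_neg_one]
  rw [h1k, ← Real.mul_self_sqrt pi_pos.le]
  field_simp
  rw [Real.sqrt_sq (Real.sqrt_nonneg _)]

end LaplaceAux

/-- High-frequency Laplace-transform estimate: for a nonnegative measurable `φ`,
`∫₀^∞ (∫₁^∞ e^{−k²t} k^{2m} φ(k) dk)² dt ≤ (π/2) ∫₁^∞ k^{4m−1} φ(k)² dk`. -/
theorem laplace_high_frequency (m : ℕ) (φ : ℝ → ℝ) (hφm : Measurable φ)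
    (hφ : ∀ k, 0 ≤ φ k) :
    ∫⁻ t in Set.Ioi (0 : ℝ),
        (∫⁻ k in Set.Ioi (1 : ℝ),
          ENNReal.ofReal (Real.exp (-k ^ 2 * t) * k ^ (2 * m) * φ k)) ^ 2
      ≤ ENNReal.ofReal (Real.pi / 2) *
        ∫⁻ k in Set.Ioi (1 : ℝ),
          ENNReal.ofReal (k ^ (4 * (m : ℝ) - 1) * φ k ^ 2) := by
  have hF : Measurable (fun p : ℝ × ℝ => ENNReal.ofReal
      (Real.sqrt Real.pi / 2 * p.1 ^ (-(1/2):ℝ) *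
        (Real.exp (-p.2^2 * p.1) * (p.2 ^ (2*m) * φ p.2) ^ 2))) := by
    apply Measurable.ennreal_ofReal
    apply Measurable.mul
    · exact ((by fun_prop : Measurable fun p : ℝ × ℝ => p.1 ^ (-(1/2):ℝ))).const_mul _
    · exact ((((measurable_snd.pow_const 2).neg.mul measurable_fst).exp).mul
        (((measurable_snd.pow_const (2*m)).mul (hφm.comp measurable_snd)).pow_const 2))
  calc ∫⁻ t in Set.Ioi (0:ℝ),
        (∫⁻ k in Set.Ioi (1:ℝ), ENNReal.ofReal (Real.exp (-k^2*t) * k^(2*m) * φ k)) ^ 2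
      ≤ ∫⁻ t in Set.Ioi (0:ℝ),
          (∫⁻ k in Set.Ioi (1:ℝ), ENNReal.ofReal (Real.exp (-k^2*t))) *
          (∫⁻ k in Set.Ioi (1:ℝ), ENNReal.ofReal (Real.exp (-k^2*t) * (k^(2*m) * φ k)^2)) :=
        lintegral_mono fun t => aux_CS m φ hφm hφ t
    _ ≤ ∫⁻ t in Set.Ioi (0:ℝ),
          ENNReal.ofReal (Real.sqrt Real.pi / 2 * t ^ (-(1/2):ℝ)) *
          (∫⁻ k in Set.Ioi (1:ℝ), ENNReal.ofReal (Real.exp (-k^2*t) * (k^(2*m) * φ k)^2)) :=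
        setLIntegral_mono' measurableSet_Ioi fun t ht =>
          mul_le_mul_left (aux_gauss ht) _
    _ = ∫⁻ t in Set.Ioi (0:ℝ), ∫⁻ k in Set.Ioi (1:ℝ),
          ENNReal.ofReal (Real.sqrt Real.pi / 2 * t ^ (-(1/2):ℝ) *
            (Real.exp (-k^2*t) * (k^(2*m) * φ k)^2)) := by
        refine setLIntegral_congr_fun measurableSet_Ioi
          (fun t ht => ?_)
        rw [← lintegral_const_mul' _ _ ENNReal.ofReal_ne_top]
        refine lintegral_congr fun k => ?_
        rw [← ENNReal.ofReal_mul (mul_nonneg (by positivity)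
          (Real.rpow_nonneg (le_of_lt (Set.mem_Ioi.mp ht)) _))]
    _ = ∫⁻ k in Set.Ioi (1:ℝ), ∫⁻ t in Set.Ioi (0:ℝ),
          ENNReal.ofReal (Real.sqrt Real.pi / 2 * t ^ (-(1/2):ℝ) *
            (Real.exp (-k^2*t) * (k^(2*m) * φ k)^2)) :=
        lintegral_lintegral_swap hF.aemeasurable
    _ = ∫⁻ k in Set.Ioi (1:ℝ),
          ENNReal.ofReal (Real.pi / 2) * ENNReal.ofReal (k ^ (4 * (m : ℝ) - 1) * φ k ^ 2) := by
        refine setLIntegral_congr_fun measurableSet_Ioi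
          (fun k hk => ?_)
        have hk1 : (1:ℝ) < k := hk
        have hk0 : (0:ℝ) < k := lt_trans one_pos hk1
        have step1 : ∀ t : ℝ,
            ENNReal.ofReal (Real.sqrt Real.pi / 2 * t ^ (-(1/2):ℝ) *
              (Real.exp (-k^2*t) * (k^(2*m) * φ k)^2))
            = ENNReal.ofReal (Real.sqrt Real.pi / 2 * t ^ (-(1/2):ℝ) * Real.exp (-k^2*t))
              * ENNReal.ofReal ((k^(2*m) * φ k)^2) := by
          intro t
          rw [← ENNReal.ofReal_mul' (sq_nonneg _)]
          congr 1
          ring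
        simp_rw [step1]
        rw [lintegral_mul_const' _ _ ENNReal.ofReal_ne_top, aux_time hk1,
          ← ENNReal.ofReal_mul (div_nonneg Real.pi_pos.le (by linarith)),
          ← ENNReal.ofReal_mul (div_nonneg Real.pi_pos.le two_pos.le)]
        have h1 : k ^ (4*(m:ℝ)-1) = k^(4*m) / k := by
          rw [show (4*(m:ℝ) - 1) = ((4*m:ℕ):ℝ) - 1 by push_cast; ring,
            Real.rpow_sub hk0, Real.rpow_natCast, Real.rpow_one]
        have hkne : k ≠ 0 := ne_of_gt hk0
        refine congrArg ENNReal.ofReal ?_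
        rw [h1]
        field_simp
        ring_nf
    _ = ENNReal.ofReal (Real.pi / 2) *
        ∫⁻ k in Set.Ioi (1:ℝ), ENNReal.ofReal (k ^ (4 * (m : ℝ) - 1) * φ k ^ 2) :=
        lintegral_const_mul' _ _ ENNReal.ofReal_ne_top
end

section
/- Let 0 < ρ < 2, b₀ > 0 and T > 0. Then there exists a constant C > 0, depending only on ρ, b₀, T, such that for every measurable f : ℝ → ℂ, ∫₀^T ( ∫_{|k|>1} e^{−2k²b₀t} |f(k)|² dk )^{1/2} dt ≤ C · ( ∫_ℝ (1+k²)^{−ρ} |f(k)|² dk )^{1/2}. -/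
/-!
On `|k| > 1` we have `2k² ≥ 1 + k²`, and `e^{-y} ≤ 2 y^{-ρ}` for `y > 0`, `0 ≤ ρ ≤ 2`
(because `y^ρ ≤ 1 + y² ≤ 2eʸ`). Hence `e^{-2k²b₀t} ≤ 2 (b₀t)^{-ρ} (1 + k²)^{-ρ}`, so the inner
integral is at most `2 (b₀t)^{-ρ}` times the `H^{-ρ}` norm squared. Its square root carries
the factor `t^{-ρ/2}`, which is integrable on `(0, T)` exactly because `ρ < 2`.
-/

open MeasureTheory Real

lemma rpow_le_one_add_sq {x ρ : ℝ} (hx : 0 ≤ x) (hρ0 : 0 ≤ ρ) (hρ2 : ρ ≤ 2) :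
    x ^ ρ ≤ 1 + x ^ 2 := by
  rcases le_total x 1 with h | h
  · linarith [rpow_le_one hx h hρ0, sq_nonneg x]
  · have := rpow_le_rpow_of_exponent_le h hρ2
    norm_cast at this
    linarith

lemma rpow_mul_exp_neg_le_two {x ρ : ℝ} (hx : 0 ≤ x) (hρ0 : 0 ≤ ρ) (hρ2 : ρ ≤ 2) :
    x ^ ρ * exp (-x) ≤ 2 := by
  have h_exp : 1 + x ^ 2 ≤ 2 * exp x := by nlinarith [quadratic_le_exp_of_nonneg hx]
  calc x ^ ρ * exp (-x) ≤ 2 * exp x * exp (-x) := by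
        gcongr; exact (rpow_le_one_add_sq hx hρ0 hρ2).trans h_exp
    _ = 2 := by rw [mul_assoc, ← exp_add, add_neg_cancel, exp_zero, mul_one]

lemma exp_neg_le_two_mul_rpow_neg {x ρ : ℝ} (hx : 0 < x) (hρ0 : 0 ≤ ρ) (hρ2 : ρ ≤ 2) :
    exp (-x) ≤ 2 * x ^ (-ρ) := by
  rw [rpow_neg hx.le, ← div_eq_mul_inv, le_div_iff₀ (by positivity), mul_comm]
  exact rpow_mul_exp_neg_le_two hx.le hρ0 hρ2

lemma exp_neg_two_mul_sq_mul_mul_le {k b t ρ : ℝ} (hk : 1 ≤ |k|) (hb : 0 < b) (ht : 0 < t)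
    (hρ0 : 0 ≤ ρ) (hρ2 : ρ ≤ 2) :
    exp (-2 * k ^ 2 * b * t) ≤ 2 * (b * t) ^ (-ρ) * (1 + k ^ 2) ^ (-ρ) := by
  have hk2 : 1 + k ^ 2 ≤ 2 * k ^ 2 := by nlinarith [sq_abs k]
  calc exp (-2 * k ^ 2 * b * t) ≤ exp (-((b * t) * (1 + k ^ 2))) := by
        gcongr; nlinarith [mul_pos hb ht]
    _ ≤ 2 * ((b * t) * (1 + k ^ 2)) ^ (-ρ) :=
        exp_neg_le_two_mul_rpow_neg (by positivity) hρ0 hρ2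
    _ = 2 * (b * t) ^ (-ρ) * (1 + k ^ 2) ^ (-ρ) := by
        rw [mul_rpow (by positivity) (by positivity), mul_assoc]

lemma setLIntegral_one_lt_abs_exp_neg_two_mul_sq_le {b t ρ : ℝ} (hb : 0 < b) (ht : 0 < t)
    (hρ0 : 0 ≤ ρ) (hρ2 : ρ ≤ 2) (g : ℝ → ℝ) :
    ∫⁻ k in {k : ℝ | 1 < |k|}, ENNReal.ofReal (exp (-2 * k ^ 2 * b * t) * g k ^ 2)
      ≤ ENNReal.ofReal (2 * (b * t) ^ (-ρ)) *
          ∫⁻ k, ENNReal.ofReal ((1 + k ^ 2) ^ (-ρ) * g k ^ 2) :=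
  calc _ ≤ ∫⁻ k in {k : ℝ | 1 < |k|}, ENNReal.ofReal (2 * (b * t) ^ (-ρ)) *
          ENNReal.ofReal ((1 + k ^ 2) ^ (-ρ) * g k ^ 2) := by
        refine setLIntegral_mono' (measurableSet_lt measurable_const measurable_abs)
          fun k hk => ?_
        rw [← ENNReal.ofReal_mul (by positivity), ← mul_assoc]
        gcongr
        exact exp_neg_two_mul_sq_mul_mul_le hk.le hb ht hρ0 hρ2
    _ ≤ _ := by
        rw [lintegral_const_mul' _ _ ENNReal.ofReal_ne_top]
        exact mul_le_mul_right (setLIntegral_le_lintegral _ _) _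

lemma lintegral_Ioc_zero_ofReal_rpow_neg {s T : ℝ} (hs : s < 1) (hT : 0 ≤ T) :
    ∫⁻ t in Set.Ioc 0 T, ENNReal.ofReal (t ^ (-s)) = ENNReal.ofReal (T ^ (1 - s) / (1 - s)) := by
  have hint : IntervalIntegrable (fun t : ℝ => t ^ (-s)) volume 0 T :=
    intervalIntegral.intervalIntegrable_rpow' (by linarith)
  rw [← ofReal_integral_eq_lintegral_ofReal
      ((intervalIntegrable_iff_integrableOn_Ioc_of_le hT).1 hint)
      (ae_restrict_of_forall_mem measurableSet_Ioc fun t ht => by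
        have : 0 < t := ht.1; positivity),
    ← intervalIntegral.integral_of_le hT, integral_rpow (Or.inl (by linarith))]
  congr 1
  rw [zero_rpow (by linarith)]
  ring_nf

lemma ofReal_two_mul_rpow_neg_rpow_half {b t ρ : ℝ} (hb : 0 < b) (ht : 0 < t) :
    ENNReal.ofReal (2 * (b * t) ^ (-ρ)) ^ ((1 : ℝ) / 2)
      = ENNReal.ofReal (√2 * b ^ (-(ρ / 2))) * ENNReal.ofReal (t ^ (-(ρ / 2))) := by
  rw [ENNReal.ofReal_rpow_of_nonneg (by positivity) (by norm_num),
    ← ENNReal.ofReal_mul (by positivity), mul_rpow hb.le ht.le,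
    mul_rpow (by norm_num) (by positivity), mul_rpow (by positivity) (by positivity),
    ← rpow_mul hb.le, ← rpow_mul ht.le, sqrt_eq_rpow, mul_assoc]
  ring_nf

/-- Boosted high-frequency trace estimate: for `0 < ρ < 2`, `b₀ > 0`, `T > 0` there is
`C > 0` (depending only on `ρ, b₀, T`) such that for all measurable `f`,
`∫₀^T (∫_{|k|>1} e^{−2k²b₀t} |f(k)|² dk)^{1/2} dt ≤ C (∫_ℝ (1+k²)^{−ρ} |f(k)|² dk)^{1/2}`. -/
theorem boosted_trace_estimate (ρ b₀ T : ℝ) (hρ0 : 0 < ρ) (hρ2 : ρ < 2)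
    (hb : 0 < b₀) (hT : 0 < T) :
    ∃ C : ℝ, 0 < C ∧ ∀ f : ℝ → ℂ, Measurable f →
      ∫⁻ t in Set.Ioc (0 : ℝ) T,
          (∫⁻ k in {k : ℝ | 1 < |k|},
            ENNReal.ofReal (Real.exp (-2 * k ^ 2 * b₀ * t) * ‖f k‖ ^ 2)) ^ ((1 : ℝ) / 2)
        ≤ ENNReal.ofReal C *
          (∫⁻ k : ℝ, ENNReal.ofReal ((1 + k ^ 2) ^ (-ρ) * ‖f k‖ ^ 2)) ^ ((1 : ℝ) / 2) := by
  have hρ1 : ρ / 2 < 1 := by linarith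
  refine ⟨√2 * b₀ ^ (-(ρ / 2)) * (T ^ (1 - ρ / 2) / (1 - ρ / 2)),
    by have := sub_pos.2 hρ1; positivity, fun f _ => ?_⟩
  set I := ∫⁻ k : ℝ, ENNReal.ofReal ((1 + k ^ 2) ^ (-ρ) * ‖f k‖ ^ 2)
  calc _ ≤ ∫⁻ t in Set.Ioc 0 T, ENNReal.ofReal (√2 * b₀ ^ (-(ρ / 2))) *
          ENNReal.ofReal (t ^ (-(ρ / 2))) * I ^ ((1 : ℝ) / 2) := by
        refine setLIntegral_mono' measurableSet_Ioc fun t ht => ?_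
        rw [← ofReal_two_mul_rpow_neg_rpow_half hb ht.1,
          ← ENNReal.mul_rpow_of_nonneg _ _ (by norm_num)]
        gcongr
        exact setLIntegral_one_lt_abs_exp_neg_two_mul_sq_le hb ht.1 hρ0.le hρ2.le _
    _ = _ := by
        rw [lintegral_mul_const _ (by fun_prop), lintegral_const_mul _ (by fun_prop),
          lintegral_Ioc_zero_ofReal_rpow_neg hρ1 hT.le, ← ENNReal.ofReal_mul (by positivity)]
end
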